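/- arXiv:1205.6028 — 6 statements merged into one kernel-verified Lean document; each statement's English description precedes it below -/
import Mathlib

section
/- Let A and B be real n×n matrices. Then the determinant of the 2n×2n real block matrix [[A, B], [-B, A]] equals |det(A + iB)|², where A + iB is viewed as a complex n×n matrix. In particular, this determinant is nonnegative, and it is strictly positive when A + iB is invertible. -/
/-!
Over any commutative ring containing a square root `i` of `-1`, conjugating `[[A, B], [-B, A]]`
by the unitriangular matrix `[[1, i], [0, 1]]` makes it block lower triangular with diagonal
blocks `A - iB` and `A + iB`. For real `A`, `B` these are entrywise complex conjugates, so the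
determinant is `conj d * d = |d|²` with `d = det (A + iB)`.
-/

open Matrix Complex ComplexConjugate

section BlockDeterminant

variable {m S : Type*} [Fintype m] [DecidableEq m] [CommRing S]

theorem unitriangular_mul_fromBlocks_mul_unitriangular {i : S} (hi : i * i = -1)
    (A B : Matrix m m S) :
    fromBlocks 1 (i • 1) 0 1 * fromBlocks A B (-B) A * fromBlocks 1 (-(i • 1)) 0 1 =
      fromBlocks (A - i • B) 0 (-B) (A + i • B) := by
  simp only [fromBlocks_multiply, Matrix.one_mul, Matrix.mul_one, Matrix.zero_mul,
    Matrix.mul_zero, smul_mul, Matrix.mul_neg, Matrix.mul_smul, smul_add, smul_neg,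
    smul_smul, hi, neg_one_smul, neg_neg, zero_add, add_zero]
  congr 1 <;> abel

theorem det_fromBlocks_eq_det_sub_mul_det_add {i : S} (hi : i * i = -1) (A B : Matrix m m S) :
    (fromBlocks A B (-B) A).det = (A - i • B).det * (A + i • B).det := by
  have h := congrArg det (unitriangular_mul_fromBlocks_mul_unitriangular hi A B)
  rwa [det_mul, det_mul, det_fromBlocks_zero₂₁, det_fromBlocks_zero₂₁, det_fromBlocks_zero₁₂,
    det_one, one_mul, one_mul, mul_one] at h

end BlockDeterminant

theorem det_fromBlocks_real_eq_sq_norm {m : Type*} [Fintype m] [DecidableEq m]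
    (A B : Matrix m m ℝ) :
    (fromBlocks A B (-B) A).det = ‖(A.map ofReal + I • B.map ofReal).det‖ ^ 2 := by
  have hconj : A.map ofReal - I • B.map ofReal = (A.map ofReal + I • B.map ofReal).map conj := by
    ext; simp [sub_eq_add_neg]
  apply ofReal_injective
  rw [Complex.sq_norm, normSq_eq_conj_mul_self, RingHom.map_det, RingHom.mapMatrix_apply, ← hconj,
    ← ofRealHom_eq_coe, RingHom.map_det, RingHom.mapMatrix_apply, fromBlocks_map,
    Matrix.map_neg _ (map_neg _)]
  exact det_fromBlocks_eq_det_sub_mul_det_add I_mul_I _ _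

/-- The determinant of the real block matrix `[[A, B], [-B, A]]` equals
`|det (A + iB)|²`; in particular it is nonnegative, and positive when
`A + iB` is invertible. -/
theorem stmt_0 (n : ℕ) (A B : Matrix (Fin n) (Fin n) ℝ) :
    (Matrix.fromBlocks A B (-B) A).det =
      ‖(Matrix.of fun i j => (A i j : ℂ) + Complex.I * (B i j : ℂ)).det‖ ^ 2 ∧
    0 ≤ (Matrix.fromBlocks A B (-B) A).det ∧
    (IsUnit (Matrix.of fun i j => (A i j : ℂ) + Complex.I * (B i j : ℂ)) →
      0 < (Matrix.fromBlocks A B (-B) A).det) := by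
  have hC : (Matrix.of fun i j => (A i j : ℂ) + Complex.I * (B i j : ℂ)) =
      A.map ofReal + I • B.map ofReal := rfl
  rw [hC, det_fromBlocks_real_eq_sq_norm, isUnit_iff_isUnit_det, isUnit_iff_ne_zero]
  exact ⟨rfl, by positivity, fun h => by positivity⟩
end

section
/- Let G : ℂ^(n+1) → ℂ be an entire (everywhere analytic) function and k a nonnegative integer such that G(λ·z) = λ^k · G(z) for all λ ∈ ℂ and all z ∈ ℂ^(n+1). Then G is a homogeneous polynomial of degree k; equivalently, in the power series expansion of G at the origin, only the terms of total degree k are nonzero. -/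
/-!
Let `p` be the Taylor series of `G` at `0`. On the line through `z`, homogeneity says that
`c ↦ G (c • z)` is the monomial `c ↦ c ^ k * G z`; its Taylor series at `0` is also obtained by
restricting `p`, whose `k`-th coefficient is then `p k (z, …, z)`. Uniqueness of one-variable
power series gives `G z = p k (z, …, z)` for every `z`, and expanding the `k`-linear map `p k` in
the standard basis exhibits its diagonal as a homogeneous polynomial of degree `k`.
-/

open MvPolynomial

section PowerSeries

variable {𝕜 E F : Type*} [NontriviallyNormedField 𝕜] [NormedAddCommGroup E] [NormedSpace 𝕜 E]
  [NormedAddCommGroup F] [NormedSpace 𝕜 F]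

noncomputable def FormalMultilinearSeries.monomial (k : ℕ) (v : F) :
    FormalMultilinearSeries 𝕜 𝕜 F :=
  fun m => ContinuousMultilinearMap.mkPiRing 𝕜 (Fin m) ((Pi.single k v : ℕ → F) m)

theorem hasFPowerSeriesAt_pow_smul (k : ℕ) (v : F) :
    HasFPowerSeriesAt (fun c : 𝕜 => c ^ k • v) (FormalMultilinearSeries.monomial k v) 0 := by
  rw [hasFPowerSeriesAt_iff]
  refine Filter.Eventually.of_forall fun c => ?_
  simp only [FormalMultilinearSeries.coeff, FormalMultilinearSeries.monomial]
  have hsingle : ∀ m ≠ k, c ^ m • (Pi.single k v : ℕ → F) m = 0 := fun m hm => by simp [hm]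
  simpa using hasSum_single k hsingle

theorem HasFPowerSeriesAt.eq_apply_diag_of_homogeneous {f : E → F}
    {p : FormalMultilinearSeries 𝕜 E F} (hf : HasFPowerSeriesAt f p 0) {k : ℕ}
    (hhom : ∀ (c : 𝕜) (z : E), f (c • z) = c ^ k • f z) (z : E) :
    f z = p k fun _ => z := by
  let u : 𝕜 →L[𝕜] E := ContinuousLinearMap.toSpanSingleton 𝕜 z
  have hline : HasFPowerSeriesAt (f ∘ u) (p.compContinuousLinearMap u) 0 :=
    (by rwa [map_zero] : HasFPowerSeriesAt f p (u 0)).compContinuousLinearMap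
  have hmonomial : HasFPowerSeriesAt (f ∘ u) (FormalMultilinearSeries.monomial k (f z)) 0 := by
    convert hasFPowerSeriesAt_pow_smul k (f z) using 1
    funext c
    simp [u, hhom]
  have hseries : FormalMultilinearSeries.monomial k (f z) = p.compContinuousLinearMap u :=
    hmonomial.eq_formalMultilinearSeries hline
  simpa [u, FormalMultilinearSeries.monomial, Function.comp_def,
    -FormalMultilinearSeries.apply_eq_prod_smul_coeff] using congr_arg (· k fun _ => 1) hseries

end PowerSeries

namespace MultilinearMap

variable {R ι κ : Type*} [CommSemiring R] [Fintype ι] [DecidableEq ι] [Fintype κ] [DecidableEq κ]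
  (f : MultilinearMap R (fun _ : κ => ι → R) R)

noncomputable def diagonalPolynomial : MvPolynomial ι R :=
  ∑ d : κ → ι, C (f fun i => Pi.single (d i) 1) * ∏ i, X (d i)

theorem isHomogeneous_diagonalPolynomial :
    f.diagonalPolynomial.IsHomogeneous (Fintype.card κ) := by
  refine IsHomogeneous.sum _ _ _ fun d _ => (?_ : IsHomogeneous _ _).C_mul _
  simpa using IsHomogeneous.prod Finset.univ (fun i => X (d i)) (fun _ => 1)
    fun i _ => isHomogeneous_X R (d i)

theorem eval_diagonalPolynomial (z : ι → R) : eval z f.diagonalPolynomial = f fun _ => z := by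
  have hz : z = ∑ j, z j • Pi.single j 1 := by
    simp_rw [← Pi.single_smul, smul_eq_mul, mul_one, Finset.univ_sum_single]
  conv_rhs => rw [hz, f.map_sum]
  simp only [diagonalPolynomial, eval_sum, eval_mul, eval_C, eval_prod, eval_X,
    f.map_smul_univ, smul_eq_mul, mul_comm]

end MultilinearMap

/-- An entire function `G : ℂ^(n+1) → ℂ` satisfying `G (λ • z) = λ^k • G z`
is a homogeneous polynomial of degree `k`. -/
theorem stmt_4 (n k : ℕ) (G : (Fin (n + 1) → ℂ) → ℂ)
    (hG : ∀ z, AnalyticAt ℂ G z)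
    (hhom : ∀ (lam : ℂ) (z : Fin (n + 1) → ℂ), G (lam • z) = lam ^ k * G z) :
    ∃ P : MvPolynomial (Fin (n + 1)) ℂ, P.IsHomogeneous k ∧
      ∀ z, G z = MvPolynomial.eval z P := by
  obtain ⟨p, hp⟩ := hG 0
  refine ⟨(p k).toMultilinearMap.diagonalPolynomial, ?_, fun z => ?_⟩
  · simpa using (p k).toMultilinearMap.isHomogeneous_diagonalPolynomial
  · rw [MultilinearMap.eval_diagonalPolynomial]
    exact hp.eq_apply_diag_of_homogeneous hhom z
end

section
/- Let V be a finite-dimensional real vector space with a positive definite inner product g and a nondegenerate alternating bilinear form ω. Then there exists a linear map J : V → V with J ∘ J = -id such that, writing S for the g-skew-adjoint operator with ω(X,Y) = g(X, S Y), one has J = S ∘ R⁻¹ where R is the positive definite square root of -S². In particular, every finite-dimensional real vector space carrying both an inner product and a nondegenerate alternating form admits a complex structure. -/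
open scoped RealInnerProductSpace

/-!
Writing `ω X Y = ⟪X, S Y⟫`, alternation makes `S` skew-adjoint and nondegeneracy makes it
injective, so `-S² = Sᵀ S` is positive definite. Its square root `R`, built from an orthonormal
eigenbasis of `-S²`, acts by a scalar on each eigenspace of `-S²`; these are `S`-invariant, so
`R` commutes with `S`, and then `(S R⁻¹)² = S² R⁻² = -1`.
-/

namespace LinearMap

variable {V : Type*} [NormedAddCommGroup V] [InnerProductSpace ℝ V]

section SkewAdjoint

variable {S : V →ₗ[ℝ] V} (hS : ∀ x y, ⟪S x, y⟫ = -⟪x, S y⟫)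
include hS

theorem inner_neg_comp_self_apply_self (x : V) : ⟪(-(S ∘ₗ S)) x, x⟫ = ‖S x‖ ^ 2 := by
  rw [neg_apply, comp_apply, inner_neg_left, hS, neg_neg, real_inner_self_eq_norm_sq]

theorem isPositive_neg_comp_self : (-(S ∘ₗ S)).IsPositive := by
  refine (isPositive_iff _).2 ⟨fun x y => ?_, fun x => ?_⟩
  · simp only [neg_apply, comp_apply, inner_neg_left, inner_neg_right, hS, neg_neg]
  · rw [inner_neg_comp_self_apply_self hS]
    positivity

end SkewAdjoint

variable [FiniteDimensional ℝ V]

theorem exists_apply_eq_inner_apply_right (ω : V →ₗ[ℝ] V →ₗ[ℝ] ℝ) :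
    ∃ S : V →ₗ[ℝ] V, ∀ X Y, ω X Y = ⟪X, S Y⟫ := by
  refine ⟨{ toFun := fun Y => (InnerProductSpace.toDual ℝ V).symm (ω.flip Y).toContinuousLinearMap
            map_add' := fun Y Z => by simp
            map_smul' := fun r Y => by simp }, fun X Y => ?_⟩
  rw [real_inner_comm]
  simp [InnerProductSpace.toDual_symm_apply]

theorem IsSymmetric.apply_eigenvectorBasis_real {T : V →ₗ[ℝ] V} (hT : T.IsSymmetric) {n : ℕ}
    (hn : Module.finrank ℝ V = n) (i : Fin n) :
    T (hT.eigenvectorBasis hn i) = hT.eigenvalues hn i • hT.eigenvectorBasis hn i :=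
  hT.apply_eigenvectorBasis hn i

namespace IsPositive

variable {T : V →ₗ[ℝ] V} (hT : T.IsPositive)

noncomputable def sqrt : V →ₗ[ℝ] V :=
  ∑ i, √(hT.isSymmetric.eigenvalues rfl i) •
    (innerₗ V (hT.isSymmetric.eigenvectorBasis rfl i)).smulRight
      (hT.isSymmetric.eigenvectorBasis rfl i)

theorem sqrt_apply (x : V) :
    hT.sqrt x = ∑ i, (√(hT.isSymmetric.eigenvalues rfl i) *
      ⟪hT.isSymmetric.eigenvectorBasis rfl i, x⟫) • hT.isSymmetric.eigenvectorBasis rfl i := by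
  simp [sqrt, mul_smul]

theorem inner_sqrt_apply (x y : V) :
    ⟪hT.sqrt x, y⟫ = ∑ i, √(hT.isSymmetric.eigenvalues rfl i) *
      (⟪hT.isSymmetric.eigenvectorBasis rfl i, x⟫ *
        ⟪hT.isSymmetric.eigenvectorBasis rfl i, y⟫) := by
  simp only [sqrt_apply, sum_inner, real_inner_smul_left, mul_assoc]

theorem isSymmetric_sqrt : hT.sqrt.IsSymmetric := fun x y => by
  rw [inner_sqrt_apply, real_inner_comm, inner_sqrt_apply]
  simp only [mul_comm (⟪_, x⟫)]

theorem sqrt_apply_of_apply_eq_smul {v : V} {c : ℝ} (hv : T v = c • v) :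
    hT.sqrt v = √c • v := by
  rw [sqrt_apply]
  set b := hT.isSymmetric.eigenvectorBasis rfl
  set μ := hT.isSymmetric.eigenvalues rfl
  have hcoeff : ∀ i, μ i * ⟪b i, v⟫ = c * ⟪b i, v⟫ := fun i => by
    have := hT.isSymmetric (b i) v
    rwa [hT.isSymmetric.apply_eigenvectorBasis_real, hv, real_inner_smul_left,
      real_inner_smul_right] at this
  conv_rhs => rw [← b.sum_repr' v, Finset.smul_sum]
  refine Finset.sum_congr rfl fun i _ => ?_
  rw [smul_smul]
  rcases eq_or_ne ⟪b i, v⟫ 0 with h | h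
  · simp [h]
  · rw [mul_right_cancel₀ h (hcoeff i), mul_comm]

theorem sqrt_comp_sqrt : hT.sqrt ∘ₗ hT.sqrt = T := by
  refine (hT.isSymmetric.eigenvectorBasis rfl).toBasis.ext fun i => ?_
  have hb := hT.isSymmetric.apply_eigenvectorBasis_real rfl i
  rw [comp_apply, OrthonormalBasis.coe_toBasis, hT.sqrt_apply_of_apply_eq_smul hb, map_smul,
    hT.sqrt_apply_of_apply_eq_smul hb, smul_smul, Real.mul_self_sqrt (hT.nonneg_eigenvalues rfl i),
    hb]

theorem commute_sqrt {A : V →ₗ[ℝ] V} (hA : Commute T A) : Commute hT.sqrt A := by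
  refine (hT.isSymmetric.eigenvectorBasis rfl).toBasis.ext fun i => ?_
  have hb := hT.isSymmetric.apply_eigenvectorBasis_real rfl i
  have hAb : T (A (hT.isSymmetric.eigenvectorBasis rfl i)) =
      hT.isSymmetric.eigenvalues rfl i • A (hT.isSymmetric.eigenvectorBasis rfl i) := by
    rw [← Module.End.mul_apply, hA.eq, Module.End.mul_apply, hb, map_smul]
  rw [OrthonormalBasis.coe_toBasis, Module.End.mul_apply, Module.End.mul_apply,
    hT.sqrt_apply_of_apply_eq_smul hAb, hT.sqrt_apply_of_apply_eq_smul hb, map_smul]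

theorem inner_sqrt_apply_self_pos (hpd : ∀ x, x ≠ 0 → 0 < ⟪T x, x⟫) {x : V} (hx : x ≠ 0) :
    0 < ⟪hT.sqrt x, x⟫ := by
  rw [inner_sqrt_apply]
  set b := hT.isSymmetric.eigenvectorBasis rfl
  have hμ : ∀ i, 0 < hT.isSymmetric.eigenvalues rfl i := fun i => by
    have := hpd (b i) (b.orthonormal.ne_zero i)
    rwa [hT.isSymmetric.apply_eigenvectorBasis_real, real_inner_smul_left,
      real_inner_self_eq_norm_sq, b.orthonormal.1 i, one_pow, mul_one] at this
  obtain ⟨i, hi⟩ : ∃ i, ⟪b i, x⟫ ≠ 0 := by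
    by_contra! h
    exact hx (by rw [← b.sum_repr' x]; simp [h])
  refine Finset.sum_pos' (fun j _ => ?_) ⟨i, Finset.mem_univ i, ?_⟩
  · exact mul_nonneg (Real.sqrt_nonneg _) (mul_self_nonneg _)
  · exact mul_pos (Real.sqrt_pos.2 (hμ i)) (mul_self_pos.2 hi)

end IsPositive

end LinearMap

theorem Commute.mul_inv_mul_self_eq_neg_one {A : Type*} [Ring A] {s : A} {u : Aˣ}
    (hsu : Commute s u) (h : u * u = -(s * s)) : s * ↑u⁻¹ * (s * ↑u⁻¹) = -1 := by
  rw [mul_assoc, ← mul_assoc _ s, ← hsu.units_inv_right.eq, mul_assoc, ← mul_assoc,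
    ← neg_neg (s * s), ← h, neg_mul, mul_assoc, Units.mul_inv_cancel_left, Units.mul_inv]

/-- A finite-dimensional real inner product space carrying a nondegenerate
alternating bilinear form `ω` admits a complex structure `J = S ∘ R⁻¹`, where
`S` is the operator with `ω X Y = ⟪X, S Y⟫` and `R` is the positive definite
square root of `-S²`. -/
theorem stmt_6 (V : Type*) [NormedAddCommGroup V] [InnerProductSpace ℝ V]
    [FiniteDimensional ℝ V]
    (ω : V →ₗ[ℝ] V →ₗ[ℝ] ℝ)
    (halt : ∀ X Y : V, ω X Y = -ω Y X)
    (hnd : ∀ X : V, (∀ Y : V, ω X Y = 0) → X = 0) :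
    ∃ S R J : V →ₗ[ℝ] V,
      (∀ X Y : V, ω X Y = ⟪X, S Y⟫) ∧
      (∀ X Y : V, ⟪R X, Y⟫ = ⟪X, R Y⟫) ∧
      (∀ X : V, X ≠ 0 → 0 < ⟪R X, X⟫) ∧
      R ∘ₗ R = -(S ∘ₗ S) ∧
      Function.Bijective R ∧
      J ∘ₗ R = S ∧
      (∀ v : V, J (J v) = -v) := by
  obtain ⟨S, hS⟩ := LinearMap.exists_apply_eq_inner_apply_right ω
  have hskew : ∀ X Y : V, ⟪S X, Y⟫ = -⟪X, S Y⟫ := fun X Y => by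
    rw [real_inner_comm, ← hS, ← hS, halt]
  have hSinj : Function.Injective S := (injective_iff_map_eq_zero S).2 fun Y hY =>
    hnd Y fun X => by rw [halt, hS, hY, inner_zero_right, neg_zero]
  have hT := LinearMap.isPositive_neg_comp_self hskew
  have hRpos : ∀ x, x ≠ 0 → 0 < ⟪hT.sqrt x, x⟫ := fun x =>
    hT.inner_sqrt_apply_self_pos fun y hy => by
      rw [LinearMap.inner_neg_comp_self_apply_self hskew]
      exact pow_pos (norm_pos_iff.2 ((map_ne_zero_iff S hSinj).2 hy)) 2
  have hRunit : IsUnit hT.sqrt := (LinearMap.isUnit_iff_ker_eq_bot _).2 <|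
    LinearMap.ker_eq_bot'.2 fun x hx => by_contra fun h => (hRpos x h).ne' (by simp [hx])
  have hSR : Commute S hT.sqrt :=
    (hT.commute_sqrt ((Commute.refl S).mul_left (Commute.refl S)).neg_left).symm
  refine ⟨S, hT.sqrt, S * ↑hRunit.unit⁻¹, hS, hT.isSymmetric_sqrt, hRpos, hT.sqrt_comp_sqrt,
    (Module.End.isUnit_iff _).1 hRunit, hRunit.unit.inv_mul_cancel_right S, fun v => ?_⟩
  exact congr($(hSR.mul_inv_mul_self_eq_neg_one (u := hRunit.unit) hT.sqrt_comp_sqrt) v)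
end

section
/- Let V be a real inner product space of dimension 2n, J : V → V a linear isometry with J² = -id, and A : V → V a self-adjoint linear map with J ∘ A = -(A ∘ J). Then the operator I - A has at most n negative eigenvalues (counted with multiplicity); equivalently, the maximal dimension of a subspace on which the quadratic form v ↦ g((I - A)v, v) is negative definite is at most n. -/
/-!
Since `J` is an isometry anticommuting with `A`, the form `q v = ⟪(I - A) v, v⟫` satisfies
`q v + q (J v) = 2 ‖v‖²`. If `q` is negative definite on `W`, then `W ∩ J W = 0`: for
`v = J u` with `u ∈ W` also `J v = -u ∈ W`, and `q v`, `q (J v)` cannot both be negative.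
Hence `2 dim W ≤ dim V = 2n`.
-/

open scoped RealInnerProductSpace

theorem Submodule.two_mul_finrank_le_of_disjoint_map {K V : Type*} [DivisionRing K]
    [AddCommGroup V] [Module K V] [FiniteDimensional K V] {f : V →ₗ[K] V}
    (hf : Function.Injective f) {W : Submodule K V} (h : Disjoint W (W.map f)) :
    2 * Module.finrank K W ≤ Module.finrank K V := by
  have := Submodule.finrank_add_finrank_le_of_disjoint h
  rw [← (Submodule.equivMapOfInjective f hf W).finrank_eq] at this
  omega

section AnticommutingComplexStructure

variable {V : Type*} [NormedAddCommGroup V] [InnerProductSpace ℝ V] {J A : V →ₗ[ℝ] V}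

theorem LinearMap.injective_of_apply_apply_eq_neg (hJ2 : ∀ v, J (J v) = -v) :
    Function.Injective J :=
  Function.LeftInverse.injective (g := fun v ↦ -J v) fun v ↦ by simp [hJ2]

theorem inner_id_sub_apply_add_inner_id_sub_apply_of_anticomm
    (hJg : ∀ u v, ⟪J u, J v⟫ = ⟪u, v⟫) (hanti : ∀ v, J (A v) = -A (J v)) (v : V) :
    ⟪((LinearMap.id : V →ₗ[ℝ] V) - A) v, v⟫ + ⟪((LinearMap.id : V →ₗ[ℝ] V) - A) (J v), J v⟫ =
      2 * ‖v‖ ^ 2 := by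
  have hAJ : ⟪A (J v), J v⟫ = -⟪A v, v⟫ := by
    rw [← neg_eq_iff_eq_neg.mpr (hanti v), inner_neg_left, hJg]
  simp only [LinearMap.sub_apply, LinearMap.id_apply, inner_sub_left, hAJ, hJg,
    real_inner_self_eq_norm_sq]
  ring

theorem disjoint_map_of_forall_inner_id_sub_apply_neg (hJ2 : ∀ v, J (J v) = -v)
    (hJg : ∀ u v, ⟪J u, J v⟫ = ⟪u, v⟫) (hanti : ∀ v, J (A v) = -A (J v))
    {W : Submodule ℝ V} (hW : ∀ v ∈ W, v ≠ 0 → ⟪((LinearMap.id : V →ₗ[ℝ] V) - A) v, v⟫ < 0) :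
    Disjoint W (W.map J) := by
  rw [Submodule.disjoint_def]
  rintro v hvW ⟨u, huW, rfl⟩
  by_contra hv
  have hJu : J (J u) ∈ W := by rw [hJ2]; exact W.neg_mem huW
  have hJu0 : J (J u) ≠ 0 :=
    (map_ne_zero_iff J (LinearMap.injective_of_apply_apply_eq_neg hJ2)).mpr hv
  have := inner_id_sub_apply_add_inner_id_sub_apply_of_anticomm hJg hanti (J u)
  nlinarith [hW _ hvW hv, hW _ hJu hJu0, sq_nonneg ‖J u‖]

end AnticommutingComplexStructure

theorem stmt_8_general (n : ℕ) (V : Type*) [NormedAddCommGroup V] [InnerProductSpace ℝ V]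
    [FiniteDimensional ℝ V] (hdim : Module.finrank ℝ V = 2 * n)
    (J A : V →ₗ[ℝ] V) (hJ2 : ∀ v : V, J (J v) = -v)
    (hJg : ∀ u v : V, ⟪J u, J v⟫ = ⟪u, v⟫)
    (hanti : ∀ v : V, J (A v) = -(A (J v))) :
    ∀ W : Submodule ℝ V,
      (∀ v ∈ W, v ≠ 0 → ⟪((LinearMap.id : V →ₗ[ℝ] V) - A) v, v⟫ < 0) →
      Module.finrank ℝ W ≤ n := by
  intro W hW
  have := Submodule.two_mul_finrank_le_of_disjoint_map
    (LinearMap.injective_of_apply_apply_eq_neg hJ2)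
    (disjoint_map_of_forall_inner_id_sub_apply_neg hJ2 hJg hanti hW)
  omega

/-- If `dim V = 2n`, `J` is a compatible complex structure and `A` is
self-adjoint anticommuting with `J`, then any subspace on which the quadratic
form `v ↦ ⟪(I - A) v, v⟫` is negative definite has dimension at most `n`. -/
theorem stmt_8 (n : ℕ) (V : Type*) [NormedAddCommGroup V] [InnerProductSpace ℝ V]
    [FiniteDimensional ℝ V] (hdim : Module.finrank ℝ V = 2 * n)
    (J A : V →ₗ[ℝ] V) (hJ2 : ∀ v : V, J (J v) = -v)
    (hJg : ∀ u v : V, ⟪J u, J v⟫ = ⟪u, v⟫)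
    (hA : ∀ u v : V, ⟪A u, v⟫ = ⟪u, A v⟫)
    (hanti : ∀ v : V, J (A v) = -(A (J v))) :
    ∀ W : Submodule ℝ V,
      (∀ v ∈ W, v ≠ 0 → ⟪((LinearMap.id : V →ₗ[ℝ] V) - A) v, v⟫ < 0) →
      Module.finrank ℝ W ≤ n :=
  stmt_8_general n V hdim J A hJ2 hJg hanti
end

section
/- With the same sl₂-type setup (W = ⊕_{k=0}^{2n} W_k, L raising degree by 2, Λ lowering degree by 2, H acting as (k-n) on W_k, [L,Λ] = H), if α ∈ W_k is primitive (Λα = 0), nonzero, and k ≤ n, then L^{n-k} α ≠ 0. That is, the map L^{n-k} restricted to primitive elements of degree k ≤ n is injective. -/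
/-!
Since `Λ α = 0` and `H` acts on `Lʲ α` by the scalar `μ + 2j` with `μ = k - n`, the relation
`[L, Λ] = H` gives `Λ Lⁱ⁺¹ α = -(i + 1)(μ + i) • Lⁱ α`. If some power of `L` kills `α`, apply
this at the least `i + 1` with `Lⁱ⁺¹ α = 0`: as `Lⁱ α ≠ 0`, the weight is `μ = -i`, i.e.
`i = n - k`, so `Lⁿ⁻ᵏ α ≠ 0`.
-/

section Raising

variable {R W : Type*} [CommRing R] [AddCommGroup W] [Module R W]

theorem Module.End.pow_apply_mem_add_nsmul_of_forall_mem {ι : Type*} [AddMonoid ι]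
    (Wk : ι → Submodule R W) (L : Module.End R W) {d : ι} (hL : ∀ k, ∀ x ∈ Wk k, L x ∈ Wk (k + d)) {k : ι} {x : W}
    (hx : x ∈ Wk k) (j : ℕ) : (L ^ j) x ∈ Wk (k + j • d) := by
  induction j with
  | zero => simpa using hx
  | succ j ih =>
    rw [pow_succ', Module.End.mul_apply, succ_nsmul, ← add_assoc]
    exact hL _ _ ih

variable {L Lam H : Module.End R W} {α : W} {μ : R}

theorem lam_apply_pow_succ_of_primitive (hcomm : L ∘ₗ Lam - Lam ∘ₗ L = H) (hprim : Lam α = 0)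
    (hweight : ∀ j : ℕ, H ((L ^ j) α) = (μ + 2 * j) • (L ^ j) α) (i : ℕ) :
    Lam ((L ^ (i + 1)) α) = -((i + 1) * (μ + i)) • (L ^ i) α := by
  have hswap : ∀ x, Lam (L x) = L (Lam x) - H x := fun x => by
    rw [← hcomm]; simp
  induction i with
  | zero => simpa [hswap, hprim] using hweight 0
  | succ i ih =>
    rw [pow_succ' L (i + 1), Module.End.mul_apply, hswap, ih, map_smul, ← Module.End.mul_apply,
      ← pow_succ', hweight, ← sub_smul]
    congr 1
    push_cast
    ring

end Raising

theorem exists_weight_eq_neg_of_pow_apply_eq_zero {K W : Type*} [Field K] [CharZero K]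
    [AddCommGroup W] [Module K W] {L Lam H : Module.End K W} {α : W} {μ : K} (hcomm : L ∘ₗ Lam - Lam ∘ₗ L = H)
    (hprim : Lam α = 0) (hweight : ∀ j : ℕ, H ((L ^ j) α) = (μ + 2 * j) • (L ^ j) α)
    (hα : α ≠ 0) (hnil : ∃ m, (L ^ m) α = 0) : ∃ i : ℕ, μ = -i ∧ (L ^ i) α ≠ 0 := by
  classical
  obtain ⟨i, hi⟩ : ∃ i, Nat.find hnil = i + 1 :=
    Nat.exists_eq_add_one.mpr <| Nat.pos_of_ne_zero fun h => hα <| by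
      simpa [h] using Nat.find_spec hnil
  have hkill : (L ^ (i + 1)) α = 0 := hi ▸ Nat.find_spec hnil
  have hlast : (L ^ i) α ≠ 0 := Nat.find_min hnil (by omega)
  have hrel := lam_apply_pow_succ_of_primitive hcomm hprim hweight i
  rw [hkill, map_zero, eq_comm, smul_eq_zero, neg_eq_zero, mul_eq_zero] at hrel
  refine ⟨i, ?_, hlast⟩
  rcases hrel with (hrel | hrel) | hrel
  · exact absurd hrel (Nat.cast_add_one_ne_zero i)
  · exact eq_neg_of_add_eq_zero_left hrel
  · exact absurd hrel hlast

theorem stmt_11_general (K : Type*) [Field K] [CharZero K] (W : Type*) [AddCommGroup W] [Module K W]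
    (n : ℕ) (Wk : ℤ → Submodule K W)
    (L Lam H : W →ₗ[K] W)
    (hL : ∀ k : ℤ, ∀ x ∈ Wk k, L x ∈ Wk (k + 2))
    (hH : ∀ k : ℤ, ∀ x ∈ Wk k, H x = ((k - (n : ℤ) : ℤ) : K) • x)
    (hcomm : L ∘ₗ Lam - Lam ∘ₗ L = H) :
    ∀ k : ℤ, ∀ α ∈ Wk k, Lam α = 0 → α ≠ 0 → k ≤ (n : ℤ) →
      (L ^ ((n : ℤ) - k).toNat) α ≠ 0 := by
  intro k α hα hprim hne _ hzero
  have hweight : ∀ j : ℕ, H ((L ^ j) α) = (((k - n : ℤ) : K) + 2 * j) • (L ^ j) α := fun j => by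
    rw [hH _ _ (Module.End.pow_apply_mem_add_nsmul_of_forall_mem Wk L hL hα j)]
    push_cast [nsmul_eq_mul]
    ring_nf
  obtain ⟨i, hμ, hi⟩ :=
    exists_weight_eq_neg_of_pow_apply_eq_zero hcomm hprim hweight hne ⟨_, hzero⟩
  have hμ' : k - n = -(i : ℤ) := by exact_mod_cast hμ
  exact hi (by rwa [show ((n : ℤ) - k).toNat = i by omega] at hzero)

/-- In the `sl₂`-setup `W = ⊕_{k=0}^{2n} W_k` with `[L, Λ] = H`, for a nonzero
primitive element `α` (`Λ α = 0`) of degree `k ≤ n`, one has `L^(n-k) α ≠ 0`. -/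
theorem stmt_11 (K : Type*) [Field K] [CharZero K] (W : Type*) [AddCommGroup W] [Module K W]
    (n : ℕ) (Wk : ℤ → Submodule K W)
    (hdsum : DirectSum.IsInternal Wk)
    (hbound : ∀ k : ℤ, (k < 0 ∨ 2 * (n : ℤ) < k) → Wk k = ⊥)
    (L Lam H : W →ₗ[K] W)
    (hL : ∀ k : ℤ, ∀ x ∈ Wk k, L x ∈ Wk (k + 2))
    (hLam : ∀ k : ℤ, ∀ x ∈ Wk k, Lam x ∈ Wk (k - 2))
    (hH : ∀ k : ℤ, ∀ x ∈ Wk k, H x = ((k - (n : ℤ) : ℤ) : K) • x)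
    (hcomm : L ∘ₗ Lam - Lam ∘ₗ L = H) :
    ∀ k : ℤ, ∀ α ∈ Wk k, Lam α = 0 → α ≠ 0 → k ≤ (n : ℤ) →
      (L ^ ((n : ℤ) - k).toNat) α ≠ 0 :=
  stmt_11_general K W n Wk L Lam H hL hH hcomm
end

section
/- Let X be a topological space and 0 → F → G → H → 0 a short exact sequence of sheaves of abelian groups on X. If F is flasque (for every open U ⊆ X the restriction map F(X) → F(U) is surjective), then the induced sequence of global sections 0 → F(X) → G(X) → H(X) → 0 is exact; in particular G(X) → H(X) is surjective. -/
/-!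
Exactness on stalks says precisely that `0 ⟶ F ⟶ G ⟶ H ⟶ 0` is a short exact sequence in the
abelian category of sheaves. Taking sections is left exact, which gives exactness at `F(X)` and
`G(X)`. Surjectivity of `G(X) ⟶ H(X)` is the Zorn's lemma argument of
`TopCat.Sheaf.IsFlasque.epi_of_shortExact`: a maximal partial lift of a global section of `H`
is defined everywhere, since a local lift near a point outside its domain differs from it on the
overlap by a section of `F`; flasqueness extends that section to all of `X`, so the local lift can
be corrected to agree with the maximal one and glued to it.
-/

open CategoryTheory TopologicalSpace Opposite TopCat.Presheaf

theorem TopCat.Presheaf.isFlasque_of_surjective_map_top {C : Type*} [Category C]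
    {FC : C → C → Type*} {CC : C → Type*} [∀ X Y, FunLike (FC X Y) (CC X) (CC Y)]
    [ConcreteCategory C FC] {X : TopCat} (F : X.Presheaf C)
    (h : ∀ U : Opens X, Function.Surjective (F.map (homOfLE (le_top (a := U))).op)) :
    F.IsFlasque where
  epi {U V} i := by
    refine ConcreteCategory.epi_of_surjective _ <|
      Function.Surjective.of_comp (g := F.map (homOfLE (le_top (a := U.unop))).op) ?_
    rw [← ConcreteCategory.coe_comp, ← F.map_comp]
    exact h V.unop

namespace TopCat.Sheaf

variable {X : TopCat} {F G H : TopCat.Sheaf AddCommGrpCat X}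

theorem app_app_eq_zero_of_stalkFunctor_map {φ : F ⟶ G} {ψ : G ⟶ H}
    (h : ∀ x a,
      (stalkFunctor AddCommGrpCat x).map ψ.1 ((stalkFunctor AddCommGrpCat x).map φ.1 a) = 0)
    (U : Opens X) (s : F.1.obj (op U)) : ψ.1.app (op U) (φ.1.app (op U) s) = 0 := by
  refine section_ext H U _ 0 fun x hx => ?_
  rw [← stalkFunctor_map_germ_apply, ← stalkFunctor_map_germ_apply]
  exact (h x _).trans (map_zero _).symm

theorem comp_eq_zero_of_stalkFunctor_map {φ : F ⟶ G} {ψ : G ⟶ H}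
    (h : ∀ x a,
      (stalkFunctor AddCommGrpCat x).map ψ.1 ((stalkFunctor AddCommGrpCat x).map φ.1 a) = 0) :
    φ ≫ ψ = 0 :=
  CategoryTheory.Sheaf.hom_ext <| TopCat.Presheaf.ext fun U => by
    ext s
    exact app_app_eq_zero_of_stalkFunctor_map h U s

theorem shortExact_of_stalkFunctor_map (φ : F ⟶ G) (ψ : G ⟶ H) (hzero : φ ≫ ψ = 0)
    (hinj : ∀ x : X, Function.Injective ((stalkFunctor AddCommGrpCat x).map φ.1))
    (hexact : ∀ x : X, Function.Exact ((stalkFunctor AddCommGrpCat x).map φ.1)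
      ((stalkFunctor AddCommGrpCat x).map ψ.1))
    (hsurj : ∀ x : X, Function.Surjective ((stalkFunctor AddCommGrpCat x).map ψ.1)) :
    (ShortComplex.mk φ ψ hzero).ShortExact where
  exact := (exact_iff_stalkFunctor_map_exact _).mpr fun x =>
    (ShortComplex.ab_exact_iff_function_exact _).mpr (hexact x)
  mono_f :=
    have (x : X) := (AddCommGrpCat.mono_iff_injective _).mpr (hinj x)
    mono_of_stalk_mono φ
  epi_g := (isLocallySurjective_iff_epi ψ).mp
    ((locally_surjective_iff_surjective_on_stalks ψ.1).mpr hsurj)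

end TopCat.Sheaf

open TopCat.Sheaf

/-- If `0 → F → G → H → 0` is a short exact sequence of sheaves of abelian
groups (exactness measured on stalks) and `F` is flasque, then the induced
sequence of global sections `0 → F(X) → G(X) → H(X) → 0` is exact. -/
theorem stmt_16 (X : TopCat) (F G H : TopCat.Sheaf AddCommGrpCat X)
    (φ : F ⟶ G) (ψ : G ⟶ H)
    (hinj : ∀ x : X,
      Function.Injective ((TopCat.Presheaf.stalkFunctor AddCommGrpCat x).map φ.1))
    (hmid : ∀ x : X,
      Set.range ((TopCat.Presheaf.stalkFunctor AddCommGrpCat x).map φ.1) =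
        {a | ((TopCat.Presheaf.stalkFunctor AddCommGrpCat x).map ψ.1) a = 0})
    (hsurj : ∀ x : X,
      Function.Surjective ((TopCat.Presheaf.stalkFunctor AddCommGrpCat x).map ψ.1))
    (hflasque : ∀ U : Opens X,
      Function.Surjective (F.1.map (homOfLE (le_top (a := U))).op)) :
    Function.Injective (φ.1.app (op ⊤)) ∧
    Set.range (φ.1.app (op ⊤)) = {a | (ψ.1.app (op ⊤)) a = 0} ∧
    Function.Surjective (ψ.1.app (op ⊤)) := by
  have hexact (x : X) : Function.Exact ((stalkFunctor AddCommGrpCat x).map φ.1)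
      ((stalkFunctor AddCommGrpCat x).map ψ.1) := fun a => (Set.ext_iff.mp (hmid x) a).symm
  have hcomp (x : X) := (hexact x).apply_apply_eq_zero
  have hS := shortExact_of_stalkFunctor_map φ ψ (comp_eq_zero_of_stalkFunctor_map hcomp)
    hinj hexact hsurj
  have : F.IsFlasque := isFlasque_of_surjective_map_top F.1 hflasque
  refine ⟨app_injective_of_stalkFunctor_map_injective φ.1 ⊤ fun x _ => hinj x, ?_,
    (AddCommGrpCat.epi_iff_surjective _).mp (IsFlasque.epi_of_shortExact hS)⟩
  ext a
  refine ⟨?_, sections_exact_of_left_exact hS.exact hS.mono_f a⟩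
  rintro ⟨b, rfl⟩
  exact app_app_eq_zero_of_stalkFunctor_map hcomp ⊤ b
end
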